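/- (Lemma 3, observed-data expression.) Under the mth-order Markov model, for every integer k with 2 ≤ k ≤ K, f(Ȳᵐₖ, O̲^{m+2}_{k−1}) = [ f(O_{k+m+1} | Ȳᵐₖ, O̲^{m+1}_{k−1}, R̄ᵐₖ = 1) ]^{1(k ≤ K−m−1)} × { f(Ȳ^{m+1}ₖ, O̲^{m+1}_{k−1}) }^{1(k ≤ m+1)} × { Σ_{y_{k−m−1} ∈ {0,1}} f(Ȳ^{m+1}ₖ, O̲^{m+1}_{k−1}) }^{1(k > m+1)}, where R̄ᵐₖ = 1 denotes the event R_{max(1,k−m)} = ⋯ = R_{k−1} = 1, Ȳᵐₖ = (Y_{max(1,k−m)},…,Y_{k−1}), Ȳ^{m+1}ₖ = (Y_{max(1,k−m−1)},…,Y_{k−1}), O̲^{m+1}_{k−1} = (O_k,…,O_{min(k+m,K)}), O̲^{m+2}_{k−1} = (O_k,…,O_{min(k+m+1,K)}), and 1(·) is the indicator function (a factor with exponent 0 is omitted). -/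

import Mathlib

open scoped Classical BigOperators

namespace MRM

/-- Observed datum at index `j`: `some (y j)` if `r j = true` (observed), otherwise `none`
(missing, i.e. the value `?`). -/
def obs {K : ℕ} (y r : Fin K → Bool) (j : Fin K) : Option Bool :=
  if r j then some (y j) else none

/-- Probability of an event under the joint pmf `p` on outcomes and response indicators. -/
noncomputable def Pr {K : ℕ} (p : (Fin K → Bool) → (Fin K → Bool) → ℝ)
    (E : (Fin K → Bool) → (Fin K → Bool) → Prop) : ℝ :=
  ∑ y : Fin K → Bool, ∑ r : Fin K → Bool, if E y r then p y r else 0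

/-- Conditional probability `P(A | C)` under `p`. -/
noncomputable def cPr {K : ℕ} (p : (Fin K → Bool) → (Fin K → Bool) → ℝ)
    (A C : (Fin K → Bool) → (Fin K → Bool) → Prop) : ℝ :=
  Pr p (fun y r => A y r ∧ C y r) / Pr p C

/-- Event: the outcomes at the 1-based positions `lo ≤ pos ≤ hi` take the values `yv pos`.
(If `hi < lo`, or the window is out of range, this is the trivial event, matching the
convention that a vector whose lower index exceeds its upper index is the null vector.) -/
def Yeq {K : ℕ} (lo hi : ℕ) (yv : ℕ → Bool) :
    (Fin K → Bool) → (Fin K → Bool) → Prop :=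
  fun y _ => ∀ j : Fin K, lo ≤ j.1 + 1 → j.1 + 1 ≤ hi → y j = yv (j.1 + 1)

/-- Event: the response indicators at positions `lo ≤ pos ≤ hi` take the values `rv pos`. -/
def Req {K : ℕ} (lo hi : ℕ) (rv : ℕ → Bool) :
    (Fin K → Bool) → (Fin K → Bool) → Prop :=
  fun _ r => ∀ j : Fin K, lo ≤ j.1 + 1 → j.1 + 1 ≤ hi → r j = rv (j.1 + 1)

/-- Event: the observed data at positions `lo ≤ pos ≤ hi` take the values `ov pos`. -/
def Oeq {K : ℕ} (lo hi : ℕ) (ov : ℕ → Option Bool) :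
    (Fin K → Bool) → (Fin K → Bool) → Prop :=
  fun y r => ∀ j : Fin K, lo ≤ j.1 + 1 → j.1 + 1 ≤ hi → obs y r j = ov (j.1 + 1)

/-- The `m`-th order Markov model:
`p(y, r) = ∏ₖ aₖ(yₖ | ȳᵐₖ) · bₖ(rₖ | ȳᵐₖ, yₖ, o̲ᵐₖ)`, where `aₖ` and `bₖ` are strictly
positive conditional pmfs in their first argument, `aₖ` depends only on the outcomes at
1-based positions `max(1, k − m), …, k`, and `bₖ` depends only on `rₖ`, the outcomes at
positions `max(1, k − m), …, k` and the observed data at positions `k + 1, …, min(k + m, K)`.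
Indices of `Fin K` are 0-based, so the 1-based paper position of `k : Fin K` is `k.1 + 1`. -/
structure Markov (K m : ℕ) where
  p : (Fin K → Bool) → (Fin K → Bool) → ℝ
  a : Fin K → (Fin K → Bool) → ℝ
  b : Fin K → (Fin K → Bool) → (Fin K → Bool) → ℝ
  a_pos : ∀ k y, 0 < a k y
  b_pos : ∀ k y r, 0 < b k y r
  a_pmf : ∀ (k : Fin K) (y : Fin K → Bool), ∑ v : Bool, a k (Function.update y k v) = 1
  b_pmf : ∀ (k : Fin K) (y r : Fin K → Bool), ∑ v : Bool, b k y (Function.update r k v) = 1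
  a_local : ∀ (k : Fin K) (y y' : Fin K → Bool),
    (∀ j : Fin K, k.1 + 1 - m ≤ j.1 + 1 → j.1 ≤ k.1 → y j = y' j) → a k y = a k y'
  b_local : ∀ (k : Fin K) (y r y' r' : Fin K → Bool), r k = r' k →
    (∀ j : Fin K, k.1 + 1 - m ≤ j.1 + 1 → j.1 ≤ k.1 → y j = y' j) →
    (∀ j : Fin K, k.1 < j.1 → j.1 + 1 ≤ k.1 + 1 + m → obs y r j = obs y' r' j) →
    b k y r = b k y' r'
  factor : ∀ y r, p y r = ∏ k : Fin K, a k y * b k y r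
  sum_one : ∑ y : Fin K → Bool, ∑ r : Fin K → Bool, p y r = 1

/-- Real value of a binary outcome. -/
def yVal (v : Bool) : ℝ := if v then 1 else 0

/-- `cₖ(ȳᵐₖ, o̲ᵐₖ; α) = E[exp(α Yₖ) | Rₖ = 1, Ȳᵐₖ = ȳᵐₖ, O̲ᵐₖ = o̲ᵐₖ]` (`k` is 1-based). -/
noncomputable def cfun {K : ℕ} (p : (Fin K → Bool) → (Fin K → Bool) → ℝ) (m : ℕ) (α : ℝ)
    (k : ℕ) (yv : ℕ → Bool) (ov : ℕ → Option Bool) : ℝ :=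
  ∑ v : Bool, Real.exp (α * yVal v) *
    cPr p (Yeq k k (fun _ => v))
      (fun y r => Req k k (fun _ => true) y r ∧ Yeq (k - m) (k - 1) yv y r ∧
        Oeq (k + 1) (k + m) ov y r)

/-- The exponential tilting restriction with sensitivity parameters `α k` (`k` is 1-based):
`f(Yₖ | Rₖ = 0, Ȳᵐₖ, O̲ᵐₖ) = f(Yₖ | Rₖ = 1, Ȳᵐₖ, O̲ᵐₖ) · exp(αₖ Yₖ) / cₖ(Ȳᵐₖ, O̲ᵐₖ; αₖ)`. -/
def Tilt {K : ℕ} (p : (Fin K → Bool) → (Fin K → Bool) → ℝ) (m : ℕ) (α : ℕ → ℝ) : Prop :=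
  ∀ (k : ℕ), 1 ≤ k → k ≤ K → ∀ (yv : ℕ → Bool) (ov : ℕ → Option Bool),
    cPr p (Yeq k k yv)
      (fun y r => Req k k (fun _ => false) y r ∧ Yeq (k - m) (k - 1) yv y r ∧
        Oeq (k + 1) (k + m) ov y r)
    = cPr p (Yeq k k yv)
        (fun y r => Req k k (fun _ => true) y r ∧ Yeq (k - m) (k - 1) yv y r ∧
          Oeq (k + 1) (k + m) ov y r)
      * Real.exp (α k * yVal (yv k)) / cfun p m (α k) k yv ov

/-! The only probabilistic input is a conditional independence: given the window
`Ȳᵐₖ, O̲^{m+1}_{k−1}`, the observations from time `k` on are independent of the responses before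
time `k`. It follows from the factorization by an exchange argument: if two configurations agree
on the window, swapping their pasts leaves the product of their probabilities unchanged, because
every factor `aᵢ bᵢ` of the model reads only its own side of time `k` and the window. Given this,
the first factor of the claim is `f(O_{k+m+1} | Ȳᵐₖ, O̲^{m+1}_{k−1})`, and the remaining factor is
`f(Ȳᵐₖ, O̲^{m+1}_{k−1})`, written as a marginal of `Ȳ^{m+1}ₖ` when `k > m + 1`. -/

theorem sum_mul_sum_eq_of_exchange {Ω : Type*} [Fintype Ω] (σ : Ω → Ω → Ω)
    (hσσ : ∀ x y x' y', σ (σ x y) (σ x' y') = σ x y') (hσ : ∀ x, σ x x = x)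
    (p : Ω → ℝ) (C A D : Ω → Prop)
    (hC : ∀ x y, C x → C y → C (σ x y))
    (hp : ∀ x y, C x → C y → p (σ x y) * p (σ y x) = p x * p y)
    (hA : ∀ x y, A (σ x y) ↔ A y) (hD : ∀ x y, D (σ x y) ↔ D x) :
    (∑ x, if C x ∧ A x then p x else 0) * (∑ x, if C x ∧ D x then p x else 0) =
      (∑ x, if C x ∧ A x ∧ D x then p x else 0) * ∑ x, if C x then p x else 0 := by
  -- Reading `σ x y` as the past of `x` followed by the future of `y`, this swaps two pasts.
  have hswap : Function.Involutive fun q : Ω × Ω => (σ q.2 q.1, σ q.1 q.2) := fun q => by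
    simp only [hσσ, hσ]
  simp only [Finset.sum_mul_sum, ite_zero_mul_ite_zero, ← Fintype.sum_prod_type']
  refine Fintype.sum_bijective _ hswap.bijective _ _ fun ⟨x, y⟩ => ?_
  have hCC : C (σ y x) → C (σ x y) → C x ∧ C y := fun h h' => by
    simpa only [hσσ, hσ] using And.intro (hC _ _ h' h) (hC _ _ h h')
  dsimp only
  refine ite_congr (propext ?_) (fun h => ?_) fun _ => rfl
  · rw [hA, hD]
    tauto
  · obtain ⟨hx, hy⟩ := hCC h.1.1 h.2
    rw [hp y x hy hx, mul_comm]

section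

variable {K m : ℕ}

theorem Pr_congr {p : (Fin K → Bool) → (Fin K → Bool) → ℝ}
    {E F : (Fin K → Bool) → (Fin K → Bool) → Prop} (h : ∀ y r, E y r ↔ F y r) :
    Pr p E = Pr p F := by
  simp only [Pr, h]

theorem Pr_eq_sum_prod (p : (Fin K → Bool) → (Fin K → Bool) → ℝ)
    (E : (Fin K → Bool) → (Fin K → Bool) → Prop) :
    Pr p E = ∑ ω : (Fin K → Bool) × (Fin K → Bool), if E ω.1 ω.2 then p ω.1 ω.2 else 0 :=
  (Fintype.sum_prod_type' fun y r => if E y r then p y r else 0).symm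

theorem Pr_sum_bool (p : (Fin K → Bool) → (Fin K → Bool) → ℝ)
    (E : (Fin K → Bool) → (Fin K → Bool) → Prop) (j : Fin K) :
    ∑ v : Bool, Pr p (fun y r => E y r ∧ y j = v) = Pr p E := by
  unfold Pr
  rw [Finset.sum_comm]
  refine Finset.sum_congr rfl fun y _ => ?_
  rw [Finset.sum_comm]
  refine Finset.sum_congr rfl fun r _ => ?_
  rw [Fintype.sum_bool]
  cases hj : y j <;> simp [hj]

theorem Yeq_iff_of_le_one {lo lo' hi : ℕ} (h : lo ≤ 1) (h' : lo' ≤ 1) (yv : ℕ → Bool)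
    (y r : Fin K → Bool) : Yeq lo hi yv y r ↔ Yeq lo' hi yv y r :=
  forall_congr' fun j => ⟨fun hj _ => hj (by omega), fun hj _ => hj (by omega)⟩

theorem Yeq_update_iff {lo hi : ℕ} (j : Fin K) (hj : j.1 + 1 = lo) (hlo : lo ≤ hi)
    (yv : ℕ → Bool) (v : Bool) (y r : Fin K → Bool) :
    Yeq lo hi (Function.update yv lo v) y r ↔ Yeq (lo + 1) hi yv y r ∧ y j = v := by
  constructor
  · intro h
    refine ⟨fun i h1 h2 => ?_, ?_⟩
    · simpa [Function.update_of_ne (show i.1 + 1 ≠ lo by omega)] using h i (by omega) h2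
    · simpa [hj] using h j hj.ge (by omega)
  · rintro ⟨h, rfl⟩ i h1 h2
    by_cases hi : i = j
    · subst hi
      simp [hj]
    · have : i.1 + 1 ≠ lo := fun h => hi (Fin.ext (by omega))
      simpa [Function.update_of_ne this] using h i (by omega) h2

theorem Oeq_iff_and {lo mid hi : ℕ} (h₁ : lo ≤ mid + 1) (h₂ : mid ≤ hi) (ov : ℕ → Option Bool)
    (y r : Fin K → Bool) :
    Oeq lo hi ov y r ↔ Oeq lo mid ov y r ∧ Oeq (mid + 1) hi ov y r := by
  refine ⟨fun h => ⟨fun j h1 h2 => h j h1 (by omega), fun j h1 h2 => h j (by omega) h2⟩, ?_⟩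
  rintro ⟨h, h'⟩ j h1 h2
  by_cases hj : j.1 + 1 ≤ mid
  · exact h j h1 hj
  · exact h' j (by omega) h2

theorem Oeq_of_card_lt {lo hi : ℕ} (h : K < lo) (ov : ℕ → Option Bool) (y r : Fin K → Bool) :
    Oeq lo hi ov y r :=
  fun j h1 _ => absurd j.2 (by omega)

/-- Past (positions `< k`, 1-based) from `f`, present and future from `g`. -/
def splice (k : ℕ) (f g : Fin K → Bool) : Fin K → Bool :=
  fun j => if j.1 + 1 < k then f j else g j

theorem splice_of_lt {k : ℕ} (f g : Fin K → Bool) {j : Fin K} (h : j.1 + 1 < k) :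
    splice k f g j = f j :=
  if_pos h

theorem splice_of_le {k : ℕ} (f g : Fin K → Bool) {j : Fin K} (h : k ≤ j.1 + 1) :
    splice k f g j = g j :=
  if_neg (by omega)

theorem splice_splice (k : ℕ) (f g f' g' : Fin K → Bool) :
    splice k (splice k f g) (splice k f' g') = splice k f g' := by
  funext j
  by_cases h : j.1 + 1 < k <;> simp [splice, h]

theorem splice_self (k : ℕ) (f : Fin K → Bool) : splice k f f = f := by
  funext j
  simp [splice]

theorem obs_splice_of_le {k : ℕ} (y y' r r' : Fin K → Bool) {j : Fin K} (h : k ≤ j.1 + 1) :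
    obs (splice k y y') (splice k r r') j = obs y' r' j := by
  simp only [obs, splice_of_le _ _ h]

theorem Oeq_splice_iff {k lo hi : ℕ} (hlo : k ≤ lo) (ov : ℕ → Option Bool)
    (y y' r r' : Fin K → Bool) :
    Oeq lo hi ov (splice k y y') (splice k r r') ↔ Oeq lo hi ov y' r' :=
  forall_congr' fun j => forall_congr' fun h1 => by rw [obs_splice_of_le _ _ _ _ (by omega)]

theorem Yeq_splice_iff {k lo : ℕ} (yv : ℕ → Bool) (y y' r r' : Fin K → Bool) :
    Yeq lo (k - 1) yv (splice k y y') r ↔ Yeq lo (k - 1) yv y r' :=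
  forall_congr' fun j => forall_congr' fun _ =>
    imp_congr_right fun h => by rw [splice_of_lt _ _ (by omega)]

theorem Req_splice_iff {k lo : ℕ} (rv : ℕ → Bool) (y y' r r' : Fin K → Bool) :
    Req lo (k - 1) rv y (splice k r r') ↔ Req lo (k - 1) rv y' r :=
  forall_congr' fun j => forall_congr' fun _ =>
    imp_congr_right fun h => by rw [splice_of_lt _ _ (by omega)]

namespace Markov

theorem p_pos (M : Markov K m) (y r : Fin K → Bool) : 0 < M.p y r := by
  rw [M.factor]
  exact Finset.prod_pos fun i _ => mul_pos (M.a_pos i y) (M.b_pos i y r)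

theorem Pr_pos (M : Markov K m) {E : (Fin K → Bool) → (Fin K → Bool) → Prop}
    (hE : ∃ y r, E y r) : 0 < Pr M.p E := by
  obtain ⟨y, r, h⟩ := hE
  rw [Pr_eq_sum_prod]
  refine Finset.sum_pos' (fun ω _ => ?_) ⟨(y, r), Finset.mem_univ _, by simpa [h] using M.p_pos y r⟩
  split_ifs
  exacts [(M.p_pos _ _).le, le_rfl]

theorem factor_splice (M : Markov K m) {k : ℕ} {yv : ℕ → Bool} {ov : ℕ → Option Bool}
    {y r y' r' : Fin K → Bool}
    (hY : Yeq (k - m) (k - 1) yv y r) (hY' : Yeq (k - m) (k - 1) yv y' r')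
    (hO : Oeq k (k + m) ov y r) (hO' : Oeq k (k + m) ov y' r') (i : Fin K) :
    M.a i (splice k y y') * M.b i (splice k y y') (splice k r r') =
      if i.1 + 1 < k then M.a i y * M.b i y r else M.a i y' * M.b i y' r' := by
  split_ifs with hi
  · have hy : ∀ j : Fin K, i.1 + 1 - m ≤ j.1 + 1 → j.1 ≤ i.1 → splice k y y' j = y j :=
      fun j _ _ => splice_of_lt _ _ (by omega)
    rw [M.a_local i _ _ hy, M.b_local i _ _ y r (splice_of_lt _ _ hi) hy]
    intro j hij hjm
    by_cases hj : j.1 + 1 < k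
    · simp only [obs, splice_of_lt _ _ hj]
    · rw [obs_splice_of_le _ _ _ _ (by omega), hO' j (by omega) (by omega),
        hO j (by omega) (by omega)]
  · have hy : ∀ j : Fin K, i.1 + 1 - m ≤ j.1 + 1 → j.1 ≤ i.1 → splice k y y' j = y' j := by
      intro j h1 h2
      by_cases hj : j.1 + 1 < k
      · rw [splice_of_lt _ _ hj, hY j (by omega) (by omega), hY' j (by omega) (by omega)]
      · exact splice_of_le _ _ (by omega)
    rw [M.a_local i _ _ hy, M.b_local i _ _ y' r' (splice_of_le _ _ (by omega)) hy]
    exact fun j _ _ => obs_splice_of_le _ _ _ _ (by omega)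

theorem p_splice_mul_p_splice (M : Markov K m) {k : ℕ} {yv : ℕ → Bool} {ov : ℕ → Option Bool}
    {y r y' r' : Fin K → Bool}
    (hY : Yeq (k - m) (k - 1) yv y r) (hY' : Yeq (k - m) (k - 1) yv y' r')
    (hO : Oeq k (k + m) ov y r) (hO' : Oeq k (k + m) ov y' r') :
    M.p (splice k y y') (splice k r r') * M.p (splice k y' y) (splice k r' r) =
      M.p y r * M.p y' r' := by
  simp only [M.factor, ← Finset.prod_mul_distrib, M.factor_splice hY hY' hO hO',
    M.factor_splice hY' hY hO' hO]
  refine Finset.prod_congr rfl fun i _ => ?_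
  split_ifs
  · rfl
  · ring

theorem Pr_future_mul_Pr_past (M : Markov K m) {k lo hi lo' : ℕ} (hlo : k ≤ lo)
    (yv : ℕ → Bool) (ov ov' : ℕ → Option Bool) (rv : ℕ → Bool) :
    Pr M.p (fun y r => (Yeq (k - m) (k - 1) yv y r ∧ Oeq k (k + m) ov y r) ∧
        Oeq lo hi ov' y r) *
      Pr M.p (fun y r => (Yeq (k - m) (k - 1) yv y r ∧ Oeq k (k + m) ov y r) ∧
        Req lo' (k - 1) rv y r) =
    Pr M.p (fun y r => (Yeq (k - m) (k - 1) yv y r ∧ Oeq k (k + m) ov y r) ∧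
        Oeq lo hi ov' y r ∧ Req lo' (k - 1) rv y r) *
      Pr M.p (fun y r => Yeq (k - m) (k - 1) yv y r ∧ Oeq k (k + m) ov y r) := by
  simp only [Pr_eq_sum_prod]
  convert sum_mul_sum_eq_of_exchange (fun ω ω' => (splice k ω.1 ω'.1, splice k ω.2 ω'.2))
    (fun _ _ _ _ => by simp only [splice_splice]) (fun _ => by simp only [splice_self])
    (fun ω => M.p ω.1 ω.2) (fun ω => Yeq (k - m) (k - 1) yv ω.1 ω.2 ∧ Oeq k (k + m) ov ω.1 ω.2)
    (fun ω => Oeq lo hi ov' ω.1 ω.2) (fun ω => Req lo' (k - 1) rv ω.1 ω.2)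
    (fun _ _ ⟨hY, _⟩ ⟨_, hO'⟩ =>
      ⟨(Yeq_splice_iff _ _ _ _ _).2 hY, (Oeq_splice_iff le_rfl _ _ _ _ _).2 hO'⟩)
    (fun _ _ ⟨hY, hO⟩ ⟨hY', hO'⟩ => M.p_splice_mul_p_splice hY hY' hO hO')
    (fun _ _ => Oeq_splice_iff hlo _ _ _ _ _) (fun _ _ => Req_splice_iff _ _ _ _ _)

end Markov

theorem exists_Yeq_Oeq_Req (k : ℕ) (yv : ℕ → Bool) (ov : ℕ → Option Bool) :
    ∃ y r : Fin K → Bool, Yeq (k - m) (k - 1) yv y r ∧ Oeq k (k + m) ov y r ∧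
      Req (k - m) (k - 1) (fun _ => true) y r := by
  refine ⟨fun j => if j.1 + 1 < k then yv (j.1 + 1) else (ov (j.1 + 1)).getD false,
    fun j => if j.1 + 1 < k then true else (ov (j.1 + 1)).isSome, ?_, ?_, ?_⟩
  · intro j _ h
    simp [show j.1 + 1 < k by omega]
  · intro j h _
    cases hj : ov (j.1 + 1) <;> simp [obs, hj, show ¬ j.1 + 1 < k by omega]
  · intro j _ h
    simp [show j.1 + 1 < k by omega]

theorem ite_Pr_marginal_eq (p : (Fin K → Bool) → (Fin K → Bool) → ℝ) {k : ℕ} (hk : k ≤ K)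
    (yv : ℕ → Bool) (E : (Fin K → Bool) → (Fin K → Bool) → Prop) :
    (if k ≤ m + 1 then Pr p (fun y r => Yeq (k - m - 1) (k - 1) yv y r ∧ E y r)
      else ∑ v : Bool,
        Pr p (fun y r => Yeq (k - m - 1) (k - 1) (Function.update yv (k - m - 1) v) y r ∧ E y r))
      = Pr p (fun y r => Yeq (k - m) (k - 1) yv y r ∧ E y r) := by
  split_ifs with hkm
  · exact Pr_congr fun y r => and_congr_left' (Yeq_iff_of_le_one (by omega) (by omega) yv y r)
  · let j : Fin K := ⟨k - m - 2, by omega⟩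
    have hj : j.1 + 1 = k - m - 1 := by simp only [j]; omega
    calc _ = ∑ v : Bool, Pr p (fun y r => (Yeq (k - m) (k - 1) yv y r ∧ E y r) ∧ y j = v) := by
          refine Finset.sum_congr rfl fun v _ => Pr_congr fun y r => ?_
          rw [Yeq_update_iff j hj (by omega), show k - m - 1 + 1 = k - m by omega]
          tauto
      _ = _ := Pr_sum_bool p _ j

end

theorem statement4_general (K m : ℕ) (M : Markov K m)
    (k : ℕ) (hk2 : k ≤ K) (yv : ℕ → Bool) (ov : ℕ → Option Bool) :
    Pr M.p (fun y r => Yeq (k - m) (k - 1) yv y r ∧ Oeq k (k + m + 1) ov y r)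
      = (if k ≤ K - m - 1 then
            cPr M.p (Oeq (k + m + 1) (k + m + 1) ov)
              (fun y r => Yeq (k - m) (k - 1) yv y r ∧ Oeq k (k + m) ov y r ∧
                Req (k - m) (k - 1) (fun _ => true) y r)
          else 1)
        * (if k ≤ m + 1 then
             Pr M.p (fun y r => Yeq (k - m - 1) (k - 1) yv y r ∧ Oeq k (k + m) ov y r)
           else
             ∑ v : Bool,
               Pr M.p (fun y r =>
                 Yeq (k - m - 1) (k - 1) (Function.update yv (k - m - 1) v) y r ∧
                   Oeq k (k + m) ov y r)) := by
  have hsplit : ∀ y r : Fin K → Bool, Oeq k (k + m + 1) ov y r ↔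
      Oeq k (k + m) ov y r ∧ Oeq (k + m + 1) (k + m + 1) ov y r :=
    Oeq_iff_and (by omega) (by omega) ov
  rw [ite_Pr_marginal_eq M.p hk2]
  split_ifs with hkK
  · have hpos := M.Pr_pos (exists_Yeq_Oeq_Req (m := m) k yv ov)
    have hindep := M.Pr_future_mul_Pr_past (k := k) (lo := k + m + 1) (hi := k + m + 1)
      (lo' := k - m) (by omega) yv ov ov (fun _ => true)
    rw [cPr, div_mul_eq_mul_div, eq_div_iff hpos.ne']
    convert hindep using 2 <;> refine Pr_congr fun y r => ?_
    · rw [hsplit]; tauto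
    · tauto
    · tauto
  · rw [one_mul]
    refine Pr_congr fun y r => and_congr_right' ?_
    rw [hsplit, and_iff_left (Oeq_of_card_lt (by omega) ov y r)]

/-- **Lemma 3, observed-data expression.** Under the `m`th-order Markov model, for every
`2 ≤ k ≤ K`,
`f(Ȳᵐₖ, O̲^{m+2}_{k−1})
  = [f(O_{k+m+1} | Ȳᵐₖ, O̲^{m+1}_{k−1}, R̄ᵐₖ = 1)]^{1(k ≤ K−m−1)}
    × {f(Ȳ^{m+1}ₖ, O̲^{m+1}_{k−1})}^{1(k ≤ m+1)}
    × {Σ_{y_{k−m−1}} f(Ȳ^{m+1}ₖ, O̲^{m+1}_{k−1})}^{1(k > m+1)}`,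
with `O̲^{m+1}_{k−1} = (O_k, …, O_{min(k+m,K)})` and `O̲^{m+2}_{k−1} = (O_k, …, O_{min(k+m+1,K)})`
(truncation at `K` is automatic in `Oeq`). -/
theorem statement4 (K m : ℕ) (hm : 1 ≤ m) (hKm : 2 * m + 1 < K) (M : Markov K m)
    (k : ℕ) (hk1 : 2 ≤ k) (hk2 : k ≤ K) (yv : ℕ → Bool) (ov : ℕ → Option Bool) :
    Pr M.p (fun y r => Yeq (k - m) (k - 1) yv y r ∧ Oeq k (k + m + 1) ov y r)
      = (if k ≤ K - m - 1 then
            cPr M.p (Oeq (k + m + 1) (k + m + 1) ov)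
              (fun y r => Yeq (k - m) (k - 1) yv y r ∧ Oeq k (k + m) ov y r ∧
                Req (k - m) (k - 1) (fun _ => true) y r)
          else 1)
        * (if k ≤ m + 1 then
             Pr M.p (fun y r => Yeq (k - m - 1) (k - 1) yv y r ∧ Oeq k (k + m) ov y r)
           else
             ∑ v : Bool,
               Pr M.p (fun y r =>
                 Yeq (k - m - 1) (k - 1) (Function.update yv (k - m - 1) v) y r ∧
                   Oeq k (k + m) ov y r)) :=
  statement4_general K m M k hk2 yv ov

end MRM
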